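/- arXiv:2202.06232 — 2 statements merged into one kernel-verified Lean document; each statement's English description precedes it below -/
import Mathlib

section
/- Let H be a real Hilbert space, U ⊆ ℝᵏ open, φ : U → H continuously Fréchet differentiable with Dφ(w) injective for every w ∈ U, and F : H → ℝ Fréchet differentiable with gradient ∇F. For w ∈ U, let g̃(w) be the invertible matrix g̃(w)_{ij} = ⟨∂_iφ(w), ∂_jφ(w)⟩_H, let ∇_{g̃}F̃(w) = g̃(w)⁻¹ ∇_E F̃(w) be the natural gradient of F̃ = F ∘ φ (where ∇_E F̃ is the Euclidean gradient), and let P_w denote orthogonal projection of H onto span{∂₁φ(w),…,∂_kφ(w)}. Then a differentiable curve γ : I → U on an open interval I satisfies γ′(t) = ∇_{g̃}F̃(γ(t)) for all t ∈ I if and only if the curve x(t) = φ(γ(t)) satisfies x′(t) = P_{γ(t)}(∇F(x(t))) for all t ∈ I. -/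
open scoped RealInnerProductSpace

/-!
Fix `t` and write `w = γ t`, `v = γ' t`, `u = ∇F(φ w)`, `L = Dφ w`. The derivative of `φ ∘ γ` at `t`
is `L v`, which lies in `K = span {∂ᵢφ(w)}`; an element of `K` equals the orthogonal projection
of `u` iff it has the same inner products as `u` with every `∂ⱼφ(w)`. For `L v` these inner
products are the entries of `v ᵀ g̃(w)`, and for `u` they are the partial derivatives of `F ∘ φ`.
Hence `(φ ∘ γ)' = P (∇F)` at `t` is the linear system `v ᵀ g̃ = ∇_E F̃`, whose unique solution is
the natural gradient because the Gram matrix of the independent vectors `∂ᵢφ(w)` is invertible.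
-/

open Matrix Submodule

section Span

variable {E : Type*} [NormedAddCommGroup E] [InnerProductSpace ℝ E] {ι : Type*} [Fintype ι]
  {b : ι → E}

theorem eq_of_mem_span_of_inner_eq {y z : E} (hy : y ∈ span ℝ (Set.range b))
    (hz : z ∈ span ℝ (Set.range b)) (h : ∀ j, ⟪y, b j⟫ = ⟪z, b j⟫) : y = z := by
  obtain ⟨c, hc⟩ := (mem_span_range_iff_exists_fun ℝ).mp (sub_mem hy hz)
  have : ⟪y - z, y - z⟫ = 0 := by
    nth_rw 2 [← hc]
    simp [inner_sum, real_inner_smul_right, inner_sub_left, h]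
  exact sub_eq_zero.mp (inner_self_eq_zero.mp this)

theorem eq_iff_inner_eq_of_sub_orthogonal {u p y : E} (hp : p ∈ span ℝ (Set.range b))
    (horth : ∀ x ∈ span ℝ (Set.range b), ⟪u - p, x⟫ = 0) (hy : y ∈ span ℝ (Set.range b)) :
    y = p ↔ ∀ j, ⟪y, b j⟫ = ⟪u, b j⟫ := by
  have hpu : ∀ j, ⟪p, b j⟫ = ⟪u, b j⟫ := fun j => by
    have := horth (b j) (subset_span ⟨j, rfl⟩)
    rw [inner_sub_left] at this
    linarith
  refine ⟨fun hyp j => hyp ▸ hpu j, fun h => eq_of_mem_span_of_inner_eq hy hp fun j => ?_⟩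
  rw [h, hpu]

end Span

section Euclidean

variable {E : Type*} [NormedAddCommGroup E] [InnerProductSpace ℝ E] {ι : Type*} [Fintype ι]
  [DecidableEq ι]

theorem sum_sum_smul_single_eq_toLp_vecMul (M : Matrix ι ι ℝ) (d : ι → ℝ) :
    ∑ i, ∑ j, (M i j * d i) • EuclideanSpace.single j (1 : ℝ) = WithLp.toLp 2 (vecMul d M) := by
  ext l
  simp [vecMul, dotProduct, mul_comm, Pi.single_apply]

theorem linearIndependent_apply_single {L : EuclideanSpace ℝ ι →L[ℝ] E}
    (hL : Function.Injective L) :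
    LinearIndependent ℝ fun i => L (EuclideanSpace.single i 1) := by
  have := (EuclideanSpace.basisFun ι ℝ).toBasis.linearIndependent.map' L.toLinearMap
    (LinearMap.ker_eq_bot.mpr hL)
  simpa [Function.comp_def] using this

theorem apply_mem_span_apply_single (L : EuclideanSpace ℝ ι →L[ℝ] E) (v : EuclideanSpace ℝ ι) :
    L v ∈ span ℝ (Set.range fun i => L (EuclideanSpace.single i 1)) := by
  rw [← (EuclideanSpace.basisFun ι ℝ).sum_repr v, map_sum]
  refine sum_mem fun i _ => ?_
  simpa using smul_mem _ (v i) (subset_span (Set.mem_range_self i))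

theorem inner_apply_single_eq_vecMul_gram (L : EuclideanSpace ℝ ι →L[ℝ] E)
    (v : EuclideanSpace ℝ ι) (j : ι) :
    ⟪L v, L (EuclideanSpace.single j 1)⟫
      = vecMul v.ofLp (gram ℝ fun i => L (EuclideanSpace.single i 1)) j := by
  conv_lhs => rw [← (EuclideanSpace.basisFun ι ℝ).sum_repr v]
  simp [sum_inner, real_inner_smul_left, vecMul, dotProduct]

end Euclidean

section NaturalGradient

variable {H : Type*} [NormedAddCommGroup H] [InnerProductSpace ℝ H] {ι : Type*} [Fintype ι]
  [DecidableEq ι]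

theorem vecMul_eq_iff_eq_vecMul_inv {G : Matrix ι ι ℝ} (hG : IsUnit G.det) (v d : ι → ℝ) :
    vecMul v G = d ↔ v = vecMul d G⁻¹ := by
  constructor
  · rintro rfl
    rw [vecMul_vecMul, mul_nonsing_inv G hG, vecMul_one]
  · rintro rfl
    rw [vecMul_vecMul, nonsing_inv_mul G hG, vecMul_one]

theorem eq_sum_gram_inv_smul_single_iff_apply_eq {L : EuclideanSpace ℝ ι →L[ℝ] H}
    (hL : Function.Injective L) {u p : H}
    (hp : p ∈ span ℝ (Set.range fun i => L (EuclideanSpace.single i 1)))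
    (horth : ∀ x ∈ span ℝ (Set.range fun i => L (EuclideanSpace.single i 1)), ⟪u - p, x⟫ = 0)
    (v : EuclideanSpace ℝ ι) :
    v = ∑ i, ∑ j, ((gram ℝ fun i => L (EuclideanSpace.single i 1))⁻¹ i j *
        ⟪u, L (EuclideanSpace.single i 1)⟫) • EuclideanSpace.single j 1 ↔ L v = p := by
  have hG : IsUnit (gram ℝ fun i => L (EuclideanSpace.single i 1)).det :=
    (det_gram_ne_zero_iff_linearIndependent.mpr (linearIndependent_apply_single hL)).isUnit
  rw [sum_sum_smul_single_eq_toLp_vecMul,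
    eq_iff_inner_eq_of_sub_orthogonal hp horth (apply_mem_span_apply_single L v)]
  simp_rw [inner_apply_single_eq_vecMul_gram, ← funext_iff, vecMul_eq_iff_eq_vecMul_inv hG]
  exact ⟨fun h => h ▸ rfl, fun h => congrArg (WithLp.toLp 2) h⟩

theorem fderiv_comp_apply_eq_inner_gradient [CompleteSpace H] {E : Type*} [NormedAddCommGroup E]
    [NormedSpace ℝ E] {F : H → ℝ} {φ : E → H} {L : E →L[ℝ] H} {w : E}
    (hφ : HasFDerivAt φ L w) (hF : DifferentiableAt ℝ F (φ w)) (x : E) :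
    fderiv ℝ (F ∘ φ) w x = ⟪gradient F (φ w), L x⟫ := by
  rw [(hF.hasGradientAt.hasFDerivAt.comp w hφ).fderiv]
  rfl

end NaturalGradient

theorem stmt_2_general {H : Type*} [NormedAddCommGroup H] [InnerProductSpace ℝ H] [CompleteSpace H]
    {k : ℕ} {U : Set (EuclideanSpace ℝ (Fin k))}
    {φ : EuclideanSpace ℝ (Fin k) → H}
    {Dφ : EuclideanSpace ℝ (Fin k) → (EuclideanSpace ℝ (Fin k) →L[ℝ] H)}
    (hφ : ∀ w ∈ U, HasFDerivAt φ (Dφ w) w)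
    (hinj : ∀ w ∈ U, Function.Injective (Dφ w))
    {F : H → ℝ} (hF : Differentiable ℝ F)
    (g : EuclideanSpace ℝ (Fin k) → Matrix (Fin k) (Fin k) ℝ)
    (hg : ∀ w ∈ U, ∀ i j,
      g w i j = ⟪Dφ w (EuclideanSpace.single i 1), Dφ w (EuclideanSpace.single j 1)⟫)
    -- `P w` is the orthogonal projection of `H` onto `span {∂₁φ(w), …, ∂_kφ(w)}`
    (P : EuclideanSpace ℝ (Fin k) → H → H)
    (hPmem : ∀ w ∈ U, ∀ v : H,
      P w v ∈ Submodule.span ℝ (Set.range fun i => Dφ w (EuclideanSpace.single i 1)))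
    (hPorth : ∀ w ∈ U, ∀ v : H,
      ∀ u ∈ Submodule.span ℝ (Set.range fun i => Dφ w (EuclideanSpace.single i 1)),
        ⟪v - P w v, u⟫ = 0)
    {a b : ℝ} (γ γ' : ℝ → EuclideanSpace ℝ (Fin k))
    (hγU : ∀ t ∈ Set.Ioo a b, γ t ∈ U)
    (hγ : ∀ t ∈ Set.Ioo a b, HasDerivAt γ (γ' t) t) :
    (∀ t ∈ Set.Ioo a b,
        γ' t = ∑ i, ∑ j, ((g (γ t))⁻¹ i j *
          fderiv ℝ (F ∘ φ) (γ t) (EuclideanSpace.single i 1)) • EuclideanSpace.single j 1)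
      ↔ (∀ t ∈ Set.Ioo a b,
          HasDerivAt (fun s => φ (γ s)) (P (γ t) (gradient F (φ (γ t)))) t) := by
  refine forall₂_congr fun t ht => ?_
  have hw := hγU t ht
  have hcurve : HasDerivAt (fun s => φ (γ s)) (Dφ (γ t) (γ' t)) t :=
    (hφ _ hw).comp_hasDerivAt t (hγ t ht)
  have hgram : g (γ t) = gram ℝ fun i => Dφ (γ t) (EuclideanSpace.single i 1) :=
    Matrix.ext (hg _ hw)
  simp_rw [hgram, fderiv_comp_apply_eq_inner_gradient (hφ _ hw) (hF _),
    eq_sum_gram_inv_smul_single_iff_apply_eq (hinj _ hw) (hPmem _ hw _) (hPorth _ hw _)]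
  exact ⟨fun h => h ▸ hcurve, hcurve.unique⟩

/-- Natural-gradient flow lines on the parameter space correspond to projected-gradient flow
lines on the image: `γ` solves `γ′ = ∇_{g̃}(F ∘ φ)(γ)` iff `φ ∘ γ` solves
`x′ = P_{γ(t)}(∇F(x))`, where `P_w` is the orthogonal projection onto
`span {∂₁φ(w), …, ∂_kφ(w)}` and `g̃` is the pullback metric matrix. -/
theorem stmt_2 {H : Type*} [NormedAddCommGroup H] [InnerProductSpace ℝ H] [CompleteSpace H]
    {k : ℕ} {U : Set (EuclideanSpace ℝ (Fin k))} (hU : IsOpen U)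
    {φ : EuclideanSpace ℝ (Fin k) → H}
    {Dφ : EuclideanSpace ℝ (Fin k) → (EuclideanSpace ℝ (Fin k) →L[ℝ] H)}
    (hφ : ∀ w ∈ U, HasFDerivAt φ (Dφ w) w)
    (hφC1 : ContinuousOn Dφ U)
    (hinj : ∀ w ∈ U, Function.Injective (Dφ w))
    {F : H → ℝ} (hF : Differentiable ℝ F)
    (g : EuclideanSpace ℝ (Fin k) → Matrix (Fin k) (Fin k) ℝ)
    (hg : ∀ w ∈ U, ∀ i j,
      g w i j = ⟪Dφ w (EuclideanSpace.single i 1), Dφ w (EuclideanSpace.single j 1)⟫)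
    -- `P w` is the orthogonal projection of `H` onto `span {∂₁φ(w), …, ∂_kφ(w)}`
    (P : EuclideanSpace ℝ (Fin k) → H → H)
    (hPmem : ∀ w ∈ U, ∀ v : H,
      P w v ∈ Submodule.span ℝ (Set.range fun i => Dφ w (EuclideanSpace.single i 1)))
    (hPorth : ∀ w ∈ U, ∀ v : H,
      ∀ u ∈ Submodule.span ℝ (Set.range fun i => Dφ w (EuclideanSpace.single i 1)),
        ⟪v - P w v, u⟫ = 0)
    {a b : ℝ} (γ γ' : ℝ → EuclideanSpace ℝ (Fin k))
    (hγU : ∀ t ∈ Set.Ioo a b, γ t ∈ U)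
    (hγ : ∀ t ∈ Set.Ioo a b, HasDerivAt γ (γ' t) t) :
    (∀ t ∈ Set.Ioo a b,
        γ' t = ∑ i, ∑ j, ((g (γ t))⁻¹ i j *
          fderiv ℝ (F ∘ φ) (γ t) (EuclideanSpace.single i 1)) • EuclideanSpace.single j 1)
      ↔ (∀ t ∈ Set.Ioo a b,
          HasDerivAt (fun s => φ (γ s)) (P (γ t) (gradient F (φ (γ t)))) t) :=
  stmt_2_general hφ hinj hF g hg P hPmem hPorth γ γ' hγU hγ
end

section
/- Let f : ℝⁿ → ℝ be convex and differentiable with L-Lipschitz Euclidean gradient, let g assign to each x a symmetric positive definite matrix g(x) with ‖u‖² ≤ C · uᵀ g(x) u for all x, u (𝔼-compatibility, C > 0), and let x* be a global minimizer of f. Define the natural gradient descent iterates x_{k+1} = x_k − (1/(CL)) g(x_k)⁻¹ ∇f(x_k) from an initial point x₀. Let T ≥ 1 be an integer and suppose R > 0 satisfies (x_k − x*)ᵀ g(x_k) (x_k − x*) ≤ R² for all 0 ≤ k < T. Then f(x_T) − f(x*) ≤ 2LCR²/T. -/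
open Matrix
open scoped RealInnerProductSpace

/-!
The Lipschitz gradient gives the descent lemma `f y ≤ f x + ⟪∇f x, y - x⟫ + L/2 ‖y - x‖²`, and
𝔼-compatibility bounds the Euclidean length of the natural-gradient step by its `g`-length, so
each step lowers `f` by at least `s_k / (2CL)`, where `s_k = ‖∇^g f(x_k)‖²_g`. Convexity and the
Cauchy–Schwarz inequality for `g(x_k)` give `δ_k² ≤ R² s_k` for the gap `δ_k = f(x_k) - f(x*)`.
Hence `δ_{k+1} ≤ δ_k - δ_k² / (2CLR²)`, and this recursion forces `k δ_k ≤ 2CLR²`.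
-/

section Gradient

variable {E : Type*} [NormedAddCommGroup E] [InnerProductSpace ℝ E] [CompleteSpace E] {f : E → ℝ}

theorem Differentiable.hasDerivAt_comp_add_smul (hf : Differentiable ℝ f) (x v : E) (t : ℝ) :
    HasDerivAt (fun s : ℝ => f (x + s • v)) ⟪gradient f (x + t • v), v⟫ t := by
  have hline : HasDerivAt (fun s : ℝ => x + s • v) v t := by
    simpa using ((hasDerivAt_id t).smul_const v).const_add x
  simpa [InnerProductSpace.toDual_apply_apply, Function.comp_def] using
    (hf _).hasGradientAt.hasFDerivAt.comp_hasDerivAt t hline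

theorem ConvexOn.add_inner_gradient_le (hconv : ConvexOn ℝ Set.univ f) (hf : Differentiable ℝ f)
    (x y : E) : f x + ⟪gradient f x, y - x⟫ ≤ f y := by
  have hline : ConvexOn ℝ Set.univ (fun t : ℝ => f (x + t • (y - x))) := by
    simpa [Function.comp_def, AffineMap.lineMap_apply_module', add_comm] using
      hconv.comp_affineMap (AffineMap.lineMap x y)
  have := hline.le_slope_of_hasDerivAt (Set.mem_univ 0) (Set.mem_univ 1) zero_lt_one
    (hf.hasDerivAt_comp_add_smul x (y - x) 0)
  simp only [slope_def_field, zero_smul, add_zero, one_smul, add_sub_cancel, sub_zero,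
    div_one] at this
  linarith

theorem le_add_inner_gradient_add_half_mul_sq (hf : Differentiable ℝ f) {L : ℝ}
    (hLip : ∀ x y, ‖gradient f x - gradient f y‖ ≤ L * ‖x - y‖) (x y : E) :
    f y ≤ f x + ⟪gradient f x, y - x⟫ + L / 2 * ‖y - x‖ ^ 2 := by
  obtain ⟨v, rfl⟩ : ∃ v, y = x + v := ⟨y - x, (add_sub_cancel x y).symm⟩
  rw [add_sub_cancel_left]
  set φ : ℝ → ℝ := fun t => f (x + t • v) - t * ⟪gradient f x, v⟫ - L / 2 * t ^ 2 * ‖v‖ ^ 2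
  have hφ : ∀ t,
      HasDerivAt φ (⟪gradient f (x + t • v) - gradient f x, v⟫ - L * t * ‖v‖ ^ 2) t := by
    intro t
    refine (((hf.hasDerivAt_comp_add_smul x v t).sub
      ((hasDerivAt_id t).mul_const ⟪gradient f x, v⟫)).sub
      (((hasDerivAt_pow 2 t).const_mul (L / 2)).mul_const (‖v‖ ^ 2))).congr_deriv ?_
    simp only [inner_sub_left, one_mul, Nat.cast_ofNat]
    ring
  have hφ'_nonpos : ∀ t ∈ Set.Icc (0 : ℝ) 1,
      ⟪gradient f (x + t • v) - gradient f x, v⟫ - L * t * ‖v‖ ^ 2 ≤ 0 := by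
    intro t ht
    have hgrad : ‖gradient f (x + t • v) - gradient f x‖ ≤ L * t * ‖v‖ := by
      simpa [norm_smul, abs_of_nonneg ht.1, mul_assoc] using hLip (x + t • v) x
    suffices ⟪gradient f (x + t • v) - gradient f x, v⟫ ≤ L * t * ‖v‖ ^ 2 by linarith
    calc ⟪gradient f (x + t • v) - gradient f x, v⟫
        ≤ ‖gradient f (x + t • v) - gradient f x‖ * ‖v‖ := real_inner_le_norm _ _
      _ ≤ L * t * ‖v‖ * ‖v‖ := by gcongr
      _ = L * t * ‖v‖ ^ 2 := by ring
  have hanti : AntitoneOn φ (Set.Icc 0 1) :=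
    antitoneOn_of_hasDerivWithinAt_nonpos (convex_Icc 0 1)
      (fun t _ => (hφ t).continuousAt.continuousWithinAt) (fun t _ => (hφ t).hasDerivWithinAt)
      (fun t ht => hφ'_nonpos t (interior_subset ht))
  have := hanti (Set.left_mem_Icc.2 zero_le_one) (Set.right_mem_Icc.2 zero_le_one) zero_le_one
  simp only [φ, zero_smul, add_zero, one_smul, zero_mul, sub_zero, one_mul, one_pow, mul_one,
    ne_eq, OfNat.ofNat_ne_zero, not_false_eq_true, zero_pow, mul_zero] at this
  linarith

end Gradient

theorem Matrix.PosSemidef.sq_dotProduct_mulVec_le {ι : Type*} [Fintype ι] {M : Matrix ι ι ℝ}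
    (hM : M.PosSemidef) (u v : ι → ℝ) :
    (u ⬝ᵥ M *ᵥ v) ^ 2 ≤ (u ⬝ᵥ M *ᵥ u) * (v ⬝ᵥ M *ᵥ v) := by
  let := M.toSeminormedAddCommGroup hM
  let := M.toInnerProductSpace hM
  have h : ((M *ᵥ v) ⬝ᵥ star u) * ((M *ᵥ v) ⬝ᵥ star u) ≤
      ((M *ᵥ u) ⬝ᵥ star u) * ((M *ᵥ v) ⬝ᵥ star v) := real_inner_mul_inner_self_le u v
  simpa only [star_trivial, dotProduct_comm _ u, dotProduct_comm _ v, sq] using h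

theorem mul_le_one_of_le_sub_mul_sq {a : ℝ} (ha : 0 ≤ a) {δ : ℕ → ℝ} {T : ℕ}
    (hstep : ∀ k < T, δ (k + 1) ≤ δ k - a * δ k ^ 2) : ∀ k ≤ T, a * k * δ k ≤ 1 := by
  intro k
  induction k with
  | zero => simp
  | succ m ih =>
    intro hm
    have hprev : a * m * δ m ≤ 1 := ih (by omega)
    have hmul := mul_le_mul_of_nonneg_left (hstep m (by omega)) (by positivity : 0 ≤ a * (m + 1))
    have hprev' : ↑m * (a * δ m) ≤ 1 := by linarith
    -- with `t = a δ m`: `(m + 1) t (1 - t) ≤ (1 + t)(1 - t) ≤ 1` if `t ≤ 1`, and `≤ 0` otherwise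
    push_cast
    rcases le_or_gt (a * δ m) 1 with ht | ht
    · nlinarith [mul_nonneg (sub_nonneg.2 hprev') (sub_nonneg.2 ht), sq_nonneg (a * δ m)]
    · nlinarith [mul_nonneg (m.cast_nonneg : (0 : ℝ) ≤ m)
        (mul_nonneg (by linarith : 0 ≤ a * δ m) (sub_nonneg.2 ht.le))]

section NaturalGradient

variable {ι : Type*} [Fintype ι] {f : EuclideanSpace ℝ ι → ℝ} {M : Matrix ι ι ℝ}

theorem natural_gradient_step_le (hf : Differentiable ℝ f) {L C : ℝ} (hL : 0 < L) (hC : 0 < C)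
    (hLip : ∀ x y, ‖gradient f x - gradient f y‖ ≤ L * ‖x - y‖)
    (hcompat : ∀ u : EuclideanSpace ℝ ι, ‖u‖ ^ 2 ≤ C * (u ⬝ᵥ M *ᵥ u))
    {x d : EuclideanSpace ℝ ι} (hd : M *ᵥ d = gradient f x) :
    f (x - (1 / (C * L)) • d) ≤ f x - (d ⬝ᵥ M *ᵥ d) / (2 * C * L) := by
  have hinner : ⟪gradient f x, -((1 / (C * L)) • d)⟫ = -(d ⬝ᵥ M *ᵥ d) / (C * L) := by
    rw [inner_neg_right, real_inner_smul_right, EuclideanSpace.inner_eq_star_dotProduct, ← hd,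
      star_trivial]
    ring
  have hnorm : ‖-((1 / (C * L)) • d)‖ ^ 2 ≤ (1 / (C * L)) ^ 2 * (C * (d ⬝ᵥ M *ᵥ d)) := by
    rw [norm_neg, norm_smul, mul_pow, Real.norm_eq_abs, sq_abs]
    gcongr
    exact hcompat d
  calc f (x - (1 / (C * L)) • d)
      ≤ f x + ⟪gradient f x, -((1 / (C * L)) • d)⟫ + L / 2 * ‖-((1 / (C * L)) • d)‖ ^ 2 := by
        simpa only [sub_sub_cancel_left] using
          le_add_inner_gradient_add_half_mul_sq hf hLip x (x - (1 / (C * L)) • d)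
    _ ≤ f x + -(d ⬝ᵥ M *ᵥ d) / (C * L) + L / 2 * ((1 / (C * L)) ^ 2 * (C * (d ⬝ᵥ M *ᵥ d))) := by
        rw [hinner]; gcongr
    _ = f x - (d ⬝ᵥ M *ᵥ d) / (2 * C * L) := by
        field_simp
        ring

theorem sq_sub_le_mul_of_mulVec_eq_gradient (hconv : ConvexOn ℝ Set.univ f)
    (hf : Differentiable ℝ f) (hM : M.PosSemidef) {x y d : EuclideanSpace ℝ ι}
    (hd : M *ᵥ d = gradient f x) (hy : f y ≤ f x) :
    (f x - f y) ^ 2 ≤ ((x - y) ⬝ᵥ M *ᵥ (x - y)) * (d ⬝ᵥ M *ᵥ d) := by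
  have hgap : f x - f y ≤ (x - y) ⬝ᵥ M *ᵥ d := by
    have h := hconv.add_inner_gradient_le hf x y
    rw [← neg_sub x y, inner_neg_right, EuclideanSpace.inner_eq_star_dotProduct, ← hd,
      star_trivial] at h
    linarith
  calc (f x - f y) ^ 2 ≤ ((x - y) ⬝ᵥ M *ᵥ d) ^ 2 := pow_le_pow_left₀ (sub_nonneg.2 hy) hgap 2
    _ ≤ ((x - y) ⬝ᵥ M *ᵥ (x - y)) * (d ⬝ᵥ M *ᵥ d) := hM.sq_dotProduct_mulVec_le _ _

theorem natural_gradient_gap_step (hconv : ConvexOn ℝ Set.univ f) (hf : Differentiable ℝ f)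
    {L C R : ℝ} (hL : 0 < L) (hC : 0 < C) (hR : 0 < R)
    (hLip : ∀ x y, ‖gradient f x - gradient f y‖ ≤ L * ‖x - y‖) (hM : M.PosSemidef)
    (hcompat : ∀ u : EuclideanSpace ℝ ι, ‖u‖ ^ 2 ≤ C * (u ⬝ᵥ M *ᵥ u))
    {x xstar d : EuclideanSpace ℝ ι} (hmin : f xstar ≤ f x)
    (hdist : (x - xstar) ⬝ᵥ M *ᵥ (x - xstar) ≤ R ^ 2) (hd : M *ᵥ d = gradient f x) :
    f (x - (1 / (C * L)) • d) - f xstar ≤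
      (f x - f xstar) - 1 / (2 * C * L * R ^ 2) * (f x - f xstar) ^ 2 := by
  have hdescent := natural_gradient_step_le hf hL hC hLip hcompat hd
  have hs : 0 ≤ d ⬝ᵥ M *ᵥ d := by
    simpa only [star_trivial] using hM.dotProduct_mulVec_nonneg d
  have hgap : (f x - f xstar) ^ 2 ≤ R ^ 2 * (d ⬝ᵥ M *ᵥ d) :=
    (sq_sub_le_mul_of_mulVec_eq_gradient hconv hf hM hd hmin).trans
      (mul_le_mul_of_nonneg_right hdist hs)
  have hgap' : 1 / (2 * C * L * R ^ 2) * (f x - f xstar) ^ 2 ≤ (d ⬝ᵥ M *ᵥ d) / (2 * C * L) :=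
    calc 1 / (2 * C * L * R ^ 2) * (f x - f xstar) ^ 2
        ≤ 1 / (2 * C * L * R ^ 2) * (R ^ 2 * (d ⬝ᵥ M *ᵥ d)) := by gcongr
      _ = (d ⬝ᵥ M *ᵥ d) / (2 * C * L) := by field_simp
  linarith

end NaturalGradient

theorem stmt_15_general (n : ℕ) (f : EuclideanSpace ℝ (Fin n) → ℝ)
    (hconv : ConvexOn ℝ Set.univ f) (hf : Differentiable ℝ f)
    (L : ℝ) (hL : 0 < L)
    (hLip : ∀ x y : EuclideanSpace ℝ (Fin n),
      ‖gradient f x - gradient f y‖ ≤ L * ‖x - y‖)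
    (g : EuclideanSpace ℝ (Fin n) → Matrix (Fin n) (Fin n) ℝ)
    (hgpos : ∀ x, (g x).PosDef)
    (C : ℝ) (hC : 0 < C)
    (hcompat : ∀ (x u : EuclideanSpace ℝ (Fin n)), ‖u‖ ^ 2 ≤ C * (u ⬝ᵥ (g x).mulVec u))
    (xstar : EuclideanSpace ℝ (Fin n)) (hmin : ∀ y, f xstar ≤ f y)
    (x : ℕ → EuclideanSpace ℝ (Fin n))
    (hiter : ∀ (k : ℕ) (gr : EuclideanSpace ℝ (Fin n)), gr = gradient f (x k) →
      x (k + 1) = x k - (1 / (C * L)) •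
        (show EuclideanSpace ℝ (Fin n) from WithLp.toLp 2 ((g (x k))⁻¹.mulVec gr)))
    (T : ℕ) (hT : 1 ≤ T) (R : ℝ) (hR : 0 < R)
    (hRbound : ∀ k < T,
      (x k - xstar) ⬝ᵥ (g (x k)).mulVec (x k - xstar) ≤ R ^ 2) :
    f (x T) - f xstar ≤ 2 * L * C * R ^ 2 / T := by
  have hstep : ∀ k < T, f (x (k + 1)) - f xstar ≤
      (f (x k) - f xstar) - 1 / (2 * C * L * R ^ 2) * (f (x k) - f xstar) ^ 2 := by
    intro k hk
    have hd : g (x k) *ᵥ ((g (x k))⁻¹ *ᵥ WithLp.ofLp (gradient f (x k))) = gradient f (x k) := by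
      rw [mulVec_mulVec, mul_nonsing_inv _ ((isUnit_iff_isUnit_det _).1 (hgpos (x k)).isUnit),
        one_mulVec]
    rw [hiter k _ rfl]
    exact natural_gradient_gap_step hconv hf hL hC hR hLip (hgpos (x k)).posSemidef
      (hcompat (x k)) (hmin (x k)) (hRbound k hk) (d := WithLp.toLp 2 _) hd
  have hrate := mul_le_one_of_le_sub_mul_sq (δ := fun k => f (x k) - f xstar)
    (by positivity) hstep T le_rfl
  have hTpos : (0 : ℝ) < T := by exact_mod_cast hT
  rw [le_div_iff₀ hTpos]
  field_simp at hrate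
  linarith

/-- Convergence rate of natural gradient descent: for convex `f` with `L`-Lipschitz Euclidean
gradient, a metric `g` that is 𝔼-compatible with constant `C`, iterates
`x_{k+1} = x_k - (1/(CL)) g(x_k)⁻¹ ∇f(x_k)`, a global minimizer `x*`, and
`(x_k - x*)ᵀ g(x_k) (x_k - x*) ≤ R²` for all `k < T`, one has
`f(x_T) - f(x*) ≤ 2LCR²/T`. -/
theorem stmt_15 (n : ℕ) (f : EuclideanSpace ℝ (Fin n) → ℝ)
    (hconv : ConvexOn ℝ Set.univ f) (hf : Differentiable ℝ f)
    (L : ℝ) (hL : 0 < L)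
    (hLip : ∀ x y : EuclideanSpace ℝ (Fin n),
      ‖gradient f x - gradient f y‖ ≤ L * ‖x - y‖)
    (g : EuclideanSpace ℝ (Fin n) → Matrix (Fin n) (Fin n) ℝ)
    (hgsym : ∀ x, (g x).IsSymm) (hgpos : ∀ x, (g x).PosDef)
    (C : ℝ) (hC : 0 < C)
    (hcompat : ∀ (x u : EuclideanSpace ℝ (Fin n)), ‖u‖ ^ 2 ≤ C * (u ⬝ᵥ (g x).mulVec u))
    (xstar : EuclideanSpace ℝ (Fin n)) (hmin : ∀ y, f xstar ≤ f y)
    (x : ℕ → EuclideanSpace ℝ (Fin n))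
    (hiter : ∀ (k : ℕ) (gr : EuclideanSpace ℝ (Fin n)), gr = gradient f (x k) →
      x (k + 1) = x k - (1 / (C * L)) •
        (show EuclideanSpace ℝ (Fin n) from WithLp.toLp 2 ((g (x k))⁻¹.mulVec gr)))
    (T : ℕ) (hT : 1 ≤ T) (R : ℝ) (hR : 0 < R)
    (hRbound : ∀ k < T,
      (x k - xstar) ⬝ᵥ (g (x k)).mulVec (x k - xstar) ≤ R ^ 2) :
    f (x T) - f xstar ≤ 2 * L * C * R ^ 2 / T :=
  stmt_15_general n f hconv hf L hL hLip g hgpos C hC hcompat xstar hmin x hiter T hT R hR hRbound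
end
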